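/- arXiv:1006.0508 — 2 statements merged into one kernel-verified Lean document; each statement's English description precedes it below -/
import Mathlib

section
/- Let k ≥ 1, ε₁, ε₂ ∈ {0,1}, and δ₁,…,δ_k ∈ {−1,1}, and let w = A^{ε₁} B^{δ₁} A B^{δ₂} A ⋯ A B^{δ_k} A^{ε₂} ∈ PSL₂(ℤ). Then the word length of w with respect to the set S = {A, B} equals exactly 2k − 1 + ε₁ + ε₂; in particular w is not the identity. -/
open scoped MatrixGroups

noncomputable section

/-- The class `A` of the matrix `[[0,−1],[1,0]]` in `PSL₂(ℤ)`. -/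
def Aelt : PSL(2, ℤ) :=
  QuotientGroup.mk (⟨!![0, -1; 1, 0], by norm_num [Matrix.det_fin_two_of]⟩ :
    Matrix.SpecialLinearGroup (Fin 2) ℤ)

/-- The class `B` of the matrix `[[0,−1],[1,1]]` in `PSL₂(ℤ)`. -/
def Belt : PSL(2, ℤ) :=
  QuotientGroup.mk (⟨!![0, -1; 1, 1], by norm_num [Matrix.det_fin_two_of]⟩ :
    Matrix.SpecialLinearGroup (Fin 2) ℤ)

/-- The word `w = a^{ε₁} b^{δ₁} a b^{δ₂} a ⋯ a b^{δ_k} a^{ε₂}`. -/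
def wordW {G : Type*} [Group G] (a b : G) (ε₁ ε₂ : ℕ) (δ : ℕ → ℤ) (k : ℕ) : G :=
  a ^ ε₁ * ((List.range (k - 1)).map (fun i => b ^ (δ (i + 1)) * a)).prod * b ^ (δ k) * a ^ ε₂

/-- The set of lengths `n` of expressions of `g` as a product of `n` elements of `S ∪ S⁻¹`;
the word length of `g` with respect to `S` is the least element of this set. -/
def wordLengths {G : Type*} [Group G] (S : Set G) (g : G) : Set ℕ :=
  {n | ∃ L : List G, (∀ x ∈ L, x ∈ S ∪ S⁻¹) ∧ L.length = n ∧ L.prod = g}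

/-!
Multiplying an alternating word (letters `A` and `B^{±1}` alternating) on the left by a generator
and cancelling with `A² = B³ = 1` gives again an alternating word, at most one letter shorter. If
`w`, written as the alternating word `W` of the statement, were a product of `n < |W|` generators,
multiplying `W` by their inverses would give a nonempty alternating word equal to `1`. So it
suffices that nonempty alternating words are nontrivial in `PSL₂(ℤ)`. Up to conjugation such a
word is a single letter or a product of blocks `BA`, `B⁻¹A`; these lift to `[[1,0],[-1,1]]` and
`[[1,-1],[0,1]]` in `SL₂(ℤ)`, and their products have positive diagonal and nonpositive, not both
zero, off-diagonal entries, so they are not `±1`.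
-/

namespace AltWord

/-- Letters of words in `a` and `b`; no letter `a⁻¹` is needed since `a² = 1` throughout. -/
inductive Letter
  | a
  | b
  | bInv

namespace Letter

def isA : Letter → Bool
  | a => true
  | _ => false

@[simp] lemma isA_a : a.isA = true := rfl

lemma eq_a_of_isA {x : Letter} (h : x.isA = true) : x = a := by
  cases x <;> simp_all [isA]

variable {G : Type*} [Group G] (a b : G)

def eval : Letter → G
  | .a => a
  | .b => b
  | .bInv => b⁻¹

@[simp] lemma eval_a : Letter.a.eval a b = a := rfl

end Letter

open Letter

variable {G : Type*} [Group G] (a b : G)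

def eval (w : List Letter) : G := (w.map (Letter.eval a b)).prod

@[simp] lemma eval_nil : eval a b [] = 1 := rfl

@[simp] lemma eval_cons (x : Letter) (w : List Letter) :
    eval a b (x :: w) = x.eval a b * eval a b w := List.prod_cons

@[simp] lemma eval_append (u v : List Letter) : eval a b (u ++ v) = eval a b u * eval a b v := by
  simp [eval]

def IsAlternating (w : List Letter) : Prop := w.IsChain fun x y => x.isA ≠ y.isA

def consReduce : Letter → List Letter → List Letter
  | .a, .a :: t => t
  | .b, .b :: t => .bInv :: t
  | .b, .bInv :: t => t
  | .bInv, .b :: t => t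
  | .bInv, .bInv :: t => .b :: t
  | x, t => x :: t

variable {a b}

lemma eval_consReduce (ha : a ^ 2 = 1) (hb : b ^ 3 = 1) (x : Letter) (t : List Letter) :
    eval a b (consReduce x t) = x.eval a b * eval a b t := by
  have ha' : a * a = 1 := by rw [← sq, ha]
  have hb' : b * b = b⁻¹ := eq_inv_of_mul_eq_one_left (by rw [← pow_three', hb])
  have hb'' : b⁻¹ * b⁻¹ = b := by rw [← mul_inv_rev, hb', inv_inv]
  cases x <;> rcases t with _ | ⟨y, t⟩ <;> try rfl
  all_goals cases y <;> simp [consReduce, Letter.eval, ← mul_assoc, ha', hb', hb'']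

lemma IsAlternating.consReduce {t : List Letter} (ht : IsAlternating t) (x : Letter) :
    IsAlternating (consReduce x t) := by
  rcases t with _ | ⟨y, t⟩
  · cases x <;> exact List.isChain_singleton _
  cases x <;> cases y <;> simp_all [AltWord.consReduce, IsAlternating, List.isChain_cons, isA]

lemma length_le_length_consReduce (x : Letter) (t : List Letter) :
    t.length ≤ (consReduce x t).length + 1 := by
  cases x <;> rcases t with _ | ⟨y, t⟩ <;> try cases y
  all_goals simp only [consReduce, List.length_cons, List.length_nil]; omega

lemma length_consReduce_cons_of_isA_eq {x y : Letter} (h : x.isA = y.isA) (t : List Letter) :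
    t.length ≤ (consReduce y (x :: t)).length ∧ (consReduce y (x :: t)).length ≤ t.length + 1 := by
  cases x <;> cases y <;> simp_all [consReduce, isA]

lemma exists_letter_eval_eq (ha : a ^ 2 = 1) {s : G}
    (hs : s ∈ ({a, b} : Set G) ∪ ({a, b} : Set G)⁻¹) : ∃ x : Letter, x.eval a b = s := by
  have ha' : a⁻¹ = a := inv_eq_of_mul_eq_one_right (by rw [← sq, ha])
  simp only [Set.mem_union, Set.mem_insert_iff, Set.mem_singleton_iff, Set.mem_inv] at hs
  rcases hs with (rfl | rfl) | (hs | hs)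
  · exact ⟨.a, rfl⟩
  · exact ⟨.b, rfl⟩
  · exact ⟨.a, by rw [← inv_inv s, hs, ha']; rfl⟩
  · exact ⟨.bInv, by rw [← inv_inv s, hs]; rfl⟩

lemma exists_isAlternating_eval_eq_prod_mul (ha : a ^ 2 = 1) (hb : b ^ 3 = 1) {N : List Letter}
    (hN : IsAlternating N) (L : List G) (hL : ∀ s ∈ L, s ∈ ({a, b} : Set G) ∪ ({a, b} : Set G)⁻¹) :
    ∃ R, IsAlternating R ∧ eval a b R = L.prod * eval a b N ∧ N.length ≤ R.length + L.length := by
  induction L with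
  | nil => exact ⟨N, hN, by simp, by simp⟩
  | cons s L ih =>
    obtain ⟨R, hR, hRe, hRl⟩ := ih fun t ht => hL t (List.mem_cons_of_mem _ ht)
    obtain ⟨x, rfl⟩ := exists_letter_eval_eq ha (hL s List.mem_cons_self)
    refine ⟨consReduce x R, hR.consReduce x, ?_, ?_⟩
    · rw [eval_consReduce ha hb, hRe, List.prod_cons, mul_assoc]
    · have := length_le_length_consReduce x R
      simp only [List.length_cons]
      omega

theorem isLeast_wordLengths_eval (ha : a ^ 2 = 1) (hb : b ^ 3 = 1)
    (hfree : ∀ w, IsAlternating w → w ≠ [] → eval a b w ≠ 1) {w : List Letter}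
    (hw : IsAlternating w) : IsLeast (wordLengths {a, b} (eval a b w)) w.length := by
  refine ⟨⟨w.map (Letter.eval a b), ?_, List.length_map _, rfl⟩, ?_⟩
  · simp only [List.mem_map]
    rintro _ ⟨x, -, rfl⟩
    cases x <;> simp [Letter.eval]
  · rintro n ⟨L, hL, rfl, hprod⟩
    obtain ⟨R, hR, hRe, hlen⟩ := exists_isAlternating_eval_eq_prod_mul ha hb hw
      (L.map (·⁻¹)).reverse fun s hs => by
        obtain ⟨t, ht, rfl⟩ := List.mem_map.mp (List.mem_reverse.mp hs)
        rw [Set.mem_union, Set.mem_inv, inv_inv]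
        exact (hL t ht).symm
    obtain rfl : R = [] := by
      by_contra hne
      exact hfree R hR hne (by rw [hRe, ← List.prod_inv_reverse, hprod, inv_mul_cancel])
    simpa using hlen

inductive IsBlockWord : List Letter → Prop
  | nil : IsBlockWord []
  | cons {x : Letter} {w : List Letter} : x.isA = false → IsBlockWord w → IsBlockWord (x :: .a :: w)

lemma isBlockWord_of_isAlternating : ∀ {w : List Letter}, IsAlternating (.a :: w) →
    (Letter.a :: w).getLast? = some .a → IsBlockWord w
  | [], _, _ => .nil
  | [x], hw, hlast => by
    cases x <;> simp_all [IsAlternating, isA]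
  | x :: y :: w, hw, hlast => by
    simp only [IsAlternating, List.isChain_cons_cons] at hw
    obtain ⟨hax, hxy, hw⟩ := hw
    have hx : x.isA = false := by simpa [isA] using hax
    obtain rfl : y = .a := eq_a_of_isA (by simpa [hx] using hxy)
    exact .cons hx (isBlockWord_of_isAlternating hw (by simpa using hlast))

theorem eval_ne_one_of_isAlternating (ha : a ^ 2 = 1) (hb : b ^ 3 = 1)
    (hletter : ∀ x : Letter, x.eval a b ≠ 1)
    (hblock : ∀ w, IsBlockWord w → w ≠ [] → eval a b w ≠ 1) {w : List Letter}
    (hw : IsAlternating w) (hne : w ≠ []) : eval a b w ≠ 1 := by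
  induction hn : w.length using Nat.strong_induction_on generalizing w with | _ n ih =>
  obtain ⟨u, y, rfl⟩ := (List.eq_nil_or_concat' w).resolve_left hne
  rcases u with _ | ⟨x, v⟩
  · simpa using hletter y
  obtain ⟨hxv, -, hjunction⟩ := List.isChain_append.mp hw
  replace hxv : IsAlternating (x :: v) := hxv
  have hlast : ∀ z ∈ (x :: v).getLast?, z.isA ≠ y.isA := fun z hz => hjunction z hz y rfl
  intro h1
  -- `x v y` is conjugate to `y x v`: reduce the latter if `x` and `y` are of the same kind,
  -- otherwise one of the two is a block word.
  have hconj : eval a b (y :: x :: v) = 1 := by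
    have := congrArg (fun g => y.eval a b * g * (y.eval a b)⁻¹) h1
    simpa [mul_assoc] using this
  by_cases hxy : x.isA = y.isA
  · have hv : v ≠ [] := by
      rintro rfl
      exact hlast x rfl hxy
    obtain ⟨hlong, hshort⟩ := length_consReduce_cons_of_isA_eq hxy v
    refine ih _ ?_ (hxv.consReduce y) (List.ne_nil_of_length_pos ?_) rfl ?_
    · simp only [← hn, List.length_append, List.length_cons]
      omega
    · exact (List.length_pos_iff.mpr hv).trans_le hlong
    · rwa [eval_consReduce ha hb, ← eval_cons]
  · cases hx : x.isA
    · obtain rfl : y = .a := eq_a_of_isA (by simpa [hx] using hxy)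
      refine hblock _ (isBlockWord_of_isAlternating ?_ ?_) (by simp) h1
      · refine List.isChain_cons.mpr ⟨fun z hz => ?_, hw⟩
        obtain rfl : x = z := by simpa using hz
        rw [hx]
        decide
      · rw [← List.cons_append, List.getLast?_concat]
    · obtain rfl : x = .a := eq_a_of_isA hx
      have hy : y.isA = false := by
        revert hxy
        cases y <;> decide
      refine hblock (y :: .a :: v) (.cons hy (isBlockWord_of_isAlternating hxv ?_)) (by simp) hconj
      obtain ⟨z, hz⟩ : ∃ z, (Letter.a :: v).getLast? = some z :=
        ⟨_, List.getLast?_eq_some_getLast (List.cons_ne_nil _ _)⟩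
      obtain rfl := eq_a_of_isA (by simpa [hy] using hlast z hz : z.isA = true)
      exact hz

variable (a b)

lemma eval_replicate_a (n : ℕ) : eval a b (List.replicate n .a) = a ^ n := by
  simp [eval, List.map_replicate]

lemma eval_flatMap {α : Type*} (l : List α) (f : α → List Letter) :
    eval a b (l.flatMap f) = (l.map fun i => eval a b (f i)).prod := by
  induction l <;> simp [*]

def bLetter (d : ℤ) : Letter := if d = 1 then .b else .bInv

lemma isA_bLetter (d : ℤ) : (bLetter d).isA = false := by
  unfold bLetter
  split <;> rfl

variable {a b} in
lemma eval_bLetter {d : ℤ} (hd : d = -1 ∨ d = 1) : (bLetter d).eval a b = b ^ d := by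
  rcases hd with rfl | rfl <;> simp [bLetter, Letter.eval]

def canonicalWord (ε₁ ε₂ : ℕ) (δ : ℕ → ℤ) (k : ℕ) : List Letter :=
  List.replicate ε₁ .a ++ (List.range (k - 1)).flatMap (fun i => [bLetter (δ (i + 1)), .a]) ++
    [bLetter (δ k)] ++ List.replicate ε₂ .a

lemma eval_canonicalWord {ε₁ ε₂ k : ℕ} {δ : ℕ → ℤ} (hk : 1 ≤ k)
    (hδ : ∀ i, 1 ≤ i → i ≤ k → δ i = -1 ∨ δ i = 1) :
    eval a b (canonicalWord ε₁ ε₂ δ k) = wordW a b ε₁ ε₂ δ k := by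
  have hblocks : (List.range (k - 1)).map (fun i => eval a b [bLetter (δ (i + 1)), .a]) =
      (List.range (k - 1)).map (fun i => b ^ δ (i + 1) * a) := by
    refine List.map_congr_left fun i hi => ?_
    rw [List.mem_range] at hi
    simp [eval_bLetter (hδ (i + 1) (by omega) (by omega))]
  simp only [canonicalWord, wordW, eval_append, eval_replicate_a, eval_flatMap, hblocks]
  simp [eval_bLetter (hδ k hk le_rfl)]

lemma length_canonicalWord (ε₁ ε₂ : ℕ) (δ : ℕ → ℤ) {k : ℕ} (hk : 1 ≤ k) :
    (canonicalWord ε₁ ε₂ δ k).length = 2 * k - 1 + ε₁ + ε₂ := by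
  simp [canonicalWord, List.length_flatMap]
  omega

lemma isAlternating_a_cons_flatMap_append {α : Type*} (g : α → ℤ) (l : List α)
    {t : List Letter} (ht : IsAlternating (.a :: t)) :
    IsAlternating (.a :: (l.flatMap (fun i => [bLetter (g i), .a]) ++ t)) := by
  induction l with
  | nil => exact ht
  | cons i l ih =>
    simp only [List.flatMap_cons, List.cons_append, List.nil_append, IsAlternating,
      List.isChain_cons_cons, isA_bLetter]
    exact ⟨by decide, by decide, ih⟩

lemma isAlternating_canonicalWord {ε₁ ε₂ : ℕ} (hε₁ : ε₁ ≤ 1) (hε₂ : ε₂ ≤ 1) (δ : ℕ → ℤ) (k : ℕ) :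
    IsAlternating (canonicalWord ε₁ ε₂ δ k) := by
  have htail : IsAlternating (.a :: ([bLetter (δ k)] ++ List.replicate ε₂ .a)) := by
    interval_cases ε₂ <;> simp [IsAlternating, isA_bLetter]
  have h := isAlternating_a_cons_flatMap_append (fun i => δ (i + 1)) (List.range (k - 1)) htail
  simp only [canonicalWord, List.append_assoc]
  interval_cases ε₁
  · exact List.IsChain.tail h
  · exact h

end AltWord

namespace Matrix.ProjectiveSpecialLinearGroup

variable {n : Type*} [DecidableEq n] [Fintype n] {R : Type*} [CommRing R]

lemma mk_neg_one [Fact (Even (Fintype.card n))] :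
    (QuotientGroup.mk (-1 : SpecialLinearGroup n R) : ProjectiveSpecialLinearGroup n R) = 1 :=
  (QuotientGroup.eq_one_iff _).mpr (Subgroup.mem_center_iff.mpr fun g => by simp)

lemma mk_neg [Fact (Even (Fintype.card n))] (M : SpecialLinearGroup n R) :
    (QuotientGroup.mk (-M) : ProjectiveSpecialLinearGroup n R) = QuotientGroup.mk M := by
  rw [← mul_neg_one, QuotientGroup.mk_mul, mk_neg_one, mul_one]

lemma apply_eq_zero_of_mk_eq_one {M : SpecialLinearGroup n R}
    (h : (QuotientGroup.mk M : ProjectiveSpecialLinearGroup n R) = 1) {i j : n} (hij : i ≠ j) :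
    M i j = 0 := by
  rw [← SpecialLinearGroup.scalar_eq_self_of_mem_center ((QuotientGroup.eq_one_iff M).mp h) i]
  simp [hij]

end Matrix.ProjectiveSpecialLinearGroup

open ModularGroup Matrix.SpecialLinearGroup Matrix.ProjectiveSpecialLinearGroup

lemma Aelt_eq : Aelt = QuotientGroup.mk S := rfl

lemma Belt_eq : Belt = QuotientGroup.mk (S * T) := by
  rw [Belt]
  exact congrArg _ (Subtype.ext (by decide))

lemma Aelt_sq : Aelt ^ 2 = 1 := by
  rw [Aelt_eq, ← QuotientGroup.mk_pow, show S ^ 2 = -1 by decide, mk_neg_one]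

lemma Belt_pow_three : Belt ^ 3 = 1 := by
  rw [Belt_eq, ← QuotientGroup.mk_pow, show (S * T) ^ 3 = -1 by decide, mk_neg_one]

namespace AltWord

lemma Letter.eval_Aelt_Belt_ne_one (x : Letter) : x.eval Aelt Belt ≠ 1 := by
  have hA : Aelt ≠ 1 := fun h => absurd (apply_eq_zero_of_mk_eq_one h zero_ne_one) (by decide)
  have hB : Belt ≠ 1 := by
    rw [Belt_eq]
    exact fun h => absurd (apply_eq_zero_of_mk_eq_one h zero_ne_one) (by decide)
  cases x
  · exact hA
  · exact hB
  · exact inv_ne_one.mpr hB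

/-- A lift to `SL(2, ℤ)` of `x a`. -/
def blockLift : Letter → SL(2, ℤ)
  | .a => 1
  | .b => S * T * S⁻¹
  | .bInv => T⁻¹

lemma eval_mul_Aelt (x : Letter) :
    x.eval Aelt Belt * Aelt = QuotientGroup.mk (blockLift x) := by
  cases x
  · rw [Letter.eval, ← sq, Aelt_sq]
    rfl
  · rw [Letter.eval, Belt_eq, Aelt_eq, ← QuotientGroup.mk_mul, blockLift,
      show S * T * S = -(S * T * S⁻¹) by decide, mk_neg]
  · rw [Letter.eval, Belt_eq, Aelt_eq, ← QuotientGroup.mk_inv, ← QuotientGroup.mk_mul, blockLift]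
    group

def PosCone (M : SL(2, ℤ)) : Prop := 1 ≤ M 0 0 ∧ M 0 1 ≤ 0 ∧ M 1 0 ≤ 0 ∧ 1 ≤ M 1 1

lemma PosCone.blockLift_mul {M : SL(2, ℤ)} (hM : PosCone M) {x : Letter} (hx : x.isA = false) :
    PosCone (blockLift x * M) ∧ (blockLift x * M) 0 1 + (blockLift x * M) 1 0 < 0 := by
  obtain ⟨h00, h01, h10, h11⟩ := hM
  cases x
  · simp at hx
  · have hL : ((S * T * S⁻¹ : SL(2, ℤ)) : Matrix (Fin 2) (Fin 2) ℤ) = !![1, 0; -1, 1] := by decide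
    simp only [PosCone, blockLift, coe_mul, hL, Matrix.mul_apply, Fin.sum_univ_two]
    simp
    omega
  · simp only [PosCone, blockLift, coe_mul, coe_T_inv, Matrix.mul_apply, Fin.sum_univ_two]
    simp
    omega

lemma IsBlockWord.exists_posCone {w : List Letter} (hw : IsBlockWord w) :
    ∃ M, PosCone M ∧ eval Aelt Belt w = QuotientGroup.mk M := by
  induction hw with
  | nil => exact ⟨1, by simp [PosCone], rfl⟩
  | @cons x w hx _ ih =>
    obtain ⟨M, hM, hwM⟩ := ih
    refine ⟨blockLift x * M, (hM.blockLift_mul hx).1, ?_⟩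
    rw [eval_cons, eval_cons, Letter.eval_a, ← mul_assoc, eval_mul_Aelt, hwM, QuotientGroup.mk_mul]

lemma IsBlockWord.eval_ne_one {w : List Letter} (hw : IsBlockWord w) (hne : w ≠ []) :
    eval Aelt Belt w ≠ 1 := by
  cases hw with
  | nil => exact absurd rfl hne
  | @cons x w hx hw =>
    obtain ⟨M, hM, hwM⟩ := hw.exists_posCone
    rw [eval_cons, eval_cons, Letter.eval_a, ← mul_assoc, eval_mul_Aelt, hwM,
      ← QuotientGroup.mk_mul]
    intro h
    have h01 := apply_eq_zero_of_mk_eq_one h zero_ne_one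
    have h10 := apply_eq_zero_of_mk_eq_one h one_ne_zero
    have := (hM.blockLift_mul hx).2
    omega

lemma eval_Aelt_Belt_ne_one {w : List Letter} (hw : IsAlternating w) (hne : w ≠ []) :
    eval Aelt Belt w ≠ 1 :=
  eval_ne_one_of_isAlternating Aelt_sq Belt_pow_three Letter.eval_Aelt_Belt_ne_one
    (fun _ hw hne => hw.eval_ne_one hne) hw hne

end AltWord

open AltWord in
/-- For `k ≥ 1`, `ε₁, ε₂ ∈ {0,1}` and `δ₁,…,δ_k ∈ {−1,1}`, the word length of
`w = A^{ε₁} B^{δ₁} A B^{δ₂} A ⋯ A B^{δ_k} A^{ε₂} ∈ PSL₂(ℤ)` with respect to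
`{A, B}` is exactly `2k − 1 + ε₁ + ε₂`; in particular `w ≠ 1`. -/
theorem psl2_word_length (k : ℕ) (hk : 1 ≤ k) (ε₁ ε₂ : ℕ) (hε₁ : ε₁ ≤ 1) (hε₂ : ε₂ ≤ 1)
    (δ : ℕ → ℤ) (hδ : ∀ i, 1 ≤ i → i ≤ k → δ i = -1 ∨ δ i = 1) :
    IsLeast (wordLengths ({Aelt, Belt} : Set PSL(2, ℤ)) (wordW Aelt Belt ε₁ ε₂ δ k))
      (2 * k - 1 + ε₁ + ε₂) ∧
    wordW Aelt Belt ε₁ ε₂ δ k ≠ 1 := by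
  have hW := isAlternating_canonicalWord hε₁ hε₂ δ k
  have hne : canonicalWord ε₁ ε₂ δ k ≠ [] :=
    List.ne_nil_of_length_pos (by rw [length_canonicalWord ε₁ ε₂ δ hk]; omega)
  rw [← eval_canonicalWord Aelt Belt hk hδ, ← length_canonicalWord ε₁ ε₂ δ hk]
  exact ⟨isLeast_wordLengths_eval Aelt_sq Belt_pow_three (fun _ => eval_Aelt_Belt_ne_one) hW,
    eval_Aelt_Belt_ne_one hW hne⟩
end
end

section
/- The subgroup H of Thompson's group T generated by the two elements abab and ab⁻¹ab⁻¹ is a free group of rank 2 (these two elements freely generate H), and H is undistorted in T: for every finite generating set Z of T there exist constants K > 0 and L such that |g|_{{abab, ab⁻¹ab⁻¹}} ≤ K·|g|_Z + L for every g ∈ H. -/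
noncomputable section

/-- The circle `ℝ/ℤ`. -/
abbrev UnitCircle := AddCircle (1 : ℝ)

/-- A real number is dyadic if it is of the form `z / 2^n` with `z ∈ ℤ`. -/
def IsDyadic (x : ℝ) : Prop := ∃ (z : ℤ) (n : ℕ), x = (z : ℝ) / 2 ^ n

/-- `F : ℝ → ℝ` is a lift of an element of Thompson's group `T`. -/
def IsThompsonLift (F : ℝ → ℝ) : Prop :=
  StrictMono F ∧ (∀ x : ℝ, F (x + 1) = F x + 1) ∧
  ∃ B : Finset ℝ, (↑B ⊆ Set.Ico (0 : ℝ) 1) ∧ (∀ x ∈ B, IsDyadic x ∧ IsDyadic (F x)) ∧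
    ∀ x ∈ Set.Ico (0 : ℝ) 1, x ∉ B → ∃ (m : ℤ) (ε : ℝ), 0 < ε ∧
      ∀ y : ℝ, |y - x| < ε → F y = F x + (2 : ℝ) ^ m * (y - x)

/-- A bijection of the circle `ℝ/ℤ` is an element of Thompson's group `T` if it is
induced by a piecewise linear dyadic orientation-preserving lift. -/
def IsThompsonElt (f : Equiv.Perm UnitCircle) : Prop :=
  ∃ F : ℝ → ℝ, IsThompsonLift F ∧
    ∀ x : ℝ, f ((x : UnitCircle)) = ((F x : ℝ) : UnitCircle)

/-- Thompson's group `T`, as a subgroup of the group of bijections of the circle. -/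
def ThompsonT : Subgroup (Equiv.Perm UnitCircle) := Subgroup.closure {f | IsThompsonElt f}

/-- The piecewise linear map of `[0,1]` inducing the element `b` of `T`. -/
def bMap (x : ℝ) : ℝ :=
  if x ≤ 1 / 2 then x / 2 + 3 / 4 else if x ≤ 3 / 4 then 2 * x - 1 else x - 1 / 4

/-- `a` is the rotation `x ↦ x + 1/2` of the circle. -/
def IsRotHalf (a : Equiv.Perm UnitCircle) : Prop :=
  ∀ x : ℝ, a ((x : UnitCircle)) = ((x + 1 / 2 : ℝ) : UnitCircle)

/-- `b` is the element of `T` induced by the piecewise linear map `bMap` of `[0,1]`. -/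
def IsBElt (b : Equiv.Perm UnitCircle) : Prop :=
  ∀ x : ℝ, x ∈ Set.Icc (0 : ℝ) 1 → b ((x : UnitCircle)) = ((bMap x : ℝ) : UnitCircle)

/-- The word length of `g` with respect to `S`: the least `n` such that `g` is a
product of `n` elements of `S ∪ S⁻¹`. -/
def wordLen {G : Type*} [Group G] (S : Set G) (g : G) : ℕ :=
  sInf {n | ∃ L : List G, (∀ x ∈ L, x ∈ S ∪ S⁻¹) ∧ L.length = n ∧ L.prod = g}

/-!
Every element of `T` is bi-Lipschitz for the metric of `ℝ/ℤ`: on each of finitely many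
intervals its lift is affine with slope a power of `2`. Hence, for a finite generating set `Z`,
an element of `Z`-length `m` has a `K ^ m`-Lipschitz inverse.

On the other hand `u = abab` and `v = ab⁻¹ab⁻¹` play ping-pong on the circle: each of
`u^{±1}, v^{±1}` maps an arc of length `3/4` into an arc of length `1/4`, contracting distances
by `1/2`, and the image arc of each letter lies in the domain arc of every letter that may follow
it in a reduced word. So a reduced word of length `n ≥ 1` brings two points at distance `1/4` to
distance at most `2⁻ⁿ/4`. This shows that the word is not trivial in `T`, and comparing with the
Lipschitz constant of its inverse gives `2ⁿ ≤ K ^ m`, i.e. `n ≤ m log₂ K`.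
-/

open Set Filter Topology
open scoped NNReal

section WordLength

variable {G : Type*} [Group G] {S : Set G}

theorem wordLen_le_length {L : List G} (hL : ∀ x ∈ L, x ∈ S ∪ S⁻¹) :
    wordLen S L.prod ≤ L.length :=
  Nat.sInf_le ⟨L, hL, rfl, rfl⟩

theorem exists_list_length_eq_wordLen {g : G} (hg : g ∈ Subgroup.closure S) :
    ∃ L : List G, (∀ x ∈ L, x ∈ S ∪ S⁻¹) ∧ L.length = wordLen S g ∧ L.prod = g := by
  rw [← Subgroup.mem_toSubmonoid, Subgroup.closure_toSubmonoid] at hg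
  obtain ⟨L, hL, rfl⟩ := Submonoid.exists_list_of_mem_closure hg
  exact Nat.sInf_mem (s := {n | ∃ L' : List G, (∀ x ∈ L', x ∈ S ∪ S⁻¹) ∧ L'.length = n ∧
    L'.prod = L.prod}) ⟨L.length, L, hL, rfl, rfl⟩

theorem wordLen_inv_le {g : G} (hg : g ∈ Subgroup.closure S) :
    wordLen S g⁻¹ ≤ wordLen S g := by
  obtain ⟨L, hL, hlen, rfl⟩ := exists_list_length_eq_wordLen hg
  rw [List.prod_inv_reverse, ← hlen]
  refine (wordLen_le_length fun x hx => ?_).trans_eq (by simp)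
  simp only [List.mem_reverse, List.mem_map] at hx
  obtain ⟨y, hy, rfl⟩ := hx
  simpa [or_comm] using hL y hy


theorem wordLen_lift_le {α G : Type*} [DecidableEq α] [Group G] {S : Set G} {f : α → G}
    (hf : ∀ x, f x ∈ S) (w : FreeGroup α) : wordLen S (FreeGroup.lift f w) ≤ w.toWord.length := by
  conv_lhs => rw [← FreeGroup.mk_toWord (x := w), FreeGroup.lift_mk]
  refine (wordLen_le_length fun g hg => ?_).trans_eq (List.length_map _)
  obtain ⟨⟨x, _ | _⟩, -, rfl⟩ := List.mem_map.1 hg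
  · exact Or.inr (by simpa using hf x)
  · exact Or.inl (hf x)

end WordLength

section BiLipschitz

def biLipschitzPerms (X : Type*) [PseudoEMetricSpace X] : Subgroup (Equiv.Perm X) where
  carrier := {f | (∃ K, LipschitzWith K f) ∧ ∃ K, LipschitzWith K ⇑f⁻¹}
  mul_mem' := by
    rintro f g ⟨⟨K₁, hf⟩, K₁', hf'⟩ ⟨⟨K₂, hg⟩, K₂', hg'⟩
    refine ⟨⟨K₁ * K₂, hf.comp hg⟩, K₂' * K₁', ?_⟩
    rw [mul_inv_rev]
    exact hg'.comp hf'
  one_mem' := ⟨⟨1, LipschitzWith.id⟩, 1, LipschitzWith.id⟩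
  inv_mem' := fun ⟨hf, hf'⟩ => ⟨hf', by rwa [inv_inv]⟩

variable {X : Type*} [PseudoEMetricSpace X]

theorem Equiv.Perm.lipschitzWith_list_prod {K : ℝ≥0} {L : List (Equiv.Perm X)}
    (hL : ∀ f ∈ L, LipschitzWith K f) : LipschitzWith (K ^ L.length) ⇑L.prod := by
  induction L with
  | nil => simpa using LipschitzWith.id
  | cons f L ih =>
    simp only [List.forall_mem_cons] at hL
    rw [List.prod_cons, List.length_cons, pow_succ', Equiv.Perm.coe_mul]
    exact hL.1.comp (ih hL.2)

theorem Set.Finite.exists_lipschitzWith {ι Y : Type*} [PseudoEMetricSpace Y] {s : Set ι}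
    (hs : s.Finite) {f : ι → X → Y} (h : ∀ i ∈ s, ∃ K, LipschitzWith K (f i)) :
    ∃ K, ∀ i ∈ s, LipschitzWith K (f i) := by
  choose! K hK using h
  obtain ⟨M, hM⟩ := (hs.image K).bddAbove
  exact ⟨M, fun i hi => (hK i hi).weaken (hM (mem_image_of_mem K hi))⟩

theorem exists_lipschitzWith_pow_wordLen {Z : Set (Equiv.Perm X)} (hZ : Z.Finite)
    (hZL : Z ⊆ biLipschitzPerms X) :
    ∃ K : ℝ≥0, ∀ g ∈ Subgroup.closure Z, LipschitzWith (K ^ wordLen Z g) g := by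
  obtain ⟨K, hK⟩ := (hZ.union hZ.inv).exists_lipschitzWith (f := fun g : Equiv.Perm X => ⇑g) <| by
    rintro g (hg | hg)
    · exact (hZL hg).1
    · simpa using (hZL hg).2
  refine ⟨K, fun g hg => ?_⟩
  obtain ⟨L, hL, hlen, rfl⟩ := exists_list_length_eq_wordLen hg
  rw [← hlen]
  exact Equiv.Perm.lipschitzWith_list_prod fun f hf => hK f (hL f hf)

end BiLipschitz

section Slopes

def SlopeBoundedOn (c C : ℝ) (F : ℝ → ℝ) (s : Set ℝ) : Prop :=
  ∀ x ∈ s, ∀ y ∈ s, x ≤ y → c * (y - x) ≤ F y - F x ∧ F y - F x ≤ C * (y - x)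

variable {c C : ℝ} {F : ℝ → ℝ} {s : Set ℝ} {p q : ℝ}

theorem SlopeBoundedOn.mono_const {c' C' : ℝ} (h : SlopeBoundedOn c C F s) (hc : c' ≤ c)
    (hC : C ≤ C') : SlopeBoundedOn c' C' F s := by
  intro x hx y hy hxy
  have hyx : 0 ≤ y - x := sub_nonneg.2 hxy
  obtain ⟨h₁, h₂⟩ := h x hx y hy hxy
  exact ⟨(mul_le_mul_of_nonneg_right hc hyx).trans h₁,
    h₂.trans (mul_le_mul_of_nonneg_right hC hyx)⟩

theorem SlopeBoundedOn.Icc_union {e : ℝ} (h₁ : SlopeBoundedOn c C F (Icc p e))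
    (h₂ : SlopeBoundedOn c C F (Icc e q)) : SlopeBoundedOn c C F (Icc p q) := by
  intro x hx y hy hxy
  rcases le_total y e with hye | hey
  · exact h₁ x ⟨hx.1, hxy.trans hye⟩ y ⟨hy.1, hye⟩ hxy
  rcases le_total e x with hex | hxe
  · exact h₂ x ⟨hex, hx.2⟩ y ⟨hex.trans hxy, hy.2⟩ hxy
  have hl := h₁ x ⟨hx.1, hxe⟩ e ⟨hx.1.trans hxe, le_rfl⟩ hxe
  have hr := h₂ e ⟨le_rfl, hey.trans hy.2⟩ y ⟨hey, hy.2⟩ hey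
  constructor <;> linarith [hl.1, hl.2, hr.1, hr.2]

theorem SlopeBoundedOn.lipschitzOnWith (h : SlopeBoundedOn c C F s) (hc : 0 ≤ c) :
    LipschitzOnWith (Real.toNNReal C) F s := by
  refine LipschitzOnWith.of_le_add_mul' C fun x hx y hy => ?_
  rw [Real.dist_eq]
  rcases le_total x y with hxy | hyx
  · obtain ⟨h₁, h₂⟩ := h x hx y hy hxy
    rw [abs_of_nonpos (sub_nonpos.2 hxy)]
    nlinarith [mul_nonneg hc (sub_nonneg.2 hxy)]
  · obtain ⟨-, h₂⟩ := h y hy x hx hyx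
    rw [abs_of_nonneg (sub_nonneg.2 hyx)]
    linarith

theorem exists_slopeBoundedOn_of_locallyAffine (hpq : p < q) (hF : ContinuousOn F (Icc p q))
    (hloc : ∀ x ∈ Ioo p q, ∃ s > 0, ∀ᶠ y in 𝓝 x, F y = F x + s * (y - x)) :
    ∃ s > 0, SlopeBoundedOn s s F (Icc p q) := by
  have hasDerivAt_of_eventuallyEq {x s y : ℝ} (h : ∀ᶠ z in 𝓝 y, F z = F x + s * (z - x)) :
      HasDerivAt F s y := by
    have : HasDerivAt (fun z => F x + s * (z - x)) s y := by
      simpa using (((hasDerivAt_id y).sub_const x).const_mul s).const_add (F x)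
    exact this.congr_of_eventuallyEq h
  -- the slope is locally constant, hence `deriv F` has derivative `0`
  have hderiv : ∀ x ∈ Ioo p q, 0 < deriv F x ∧ HasDerivAt F (deriv F x) x ∧
      HasDerivAt (deriv F) 0 x := by
    intro x hx
    obtain ⟨s, hs, h⟩ := hloc x hx
    have hx' : deriv F =ᶠ[𝓝 x] fun _ => s :=
      h.eventually_nhds.mono fun y hy => (hasDerivAt_of_eventuallyEq hy).deriv
    refine ⟨hx'.self_of_nhds ▸ hs, ?_, (hasDerivAt_const x s).congr_of_eventuallyEq hx'⟩
    exact hx'.self_of_nhds ▸ hasDerivAt_of_eventuallyEq h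
  obtain ⟨s, hs⟩ := isOpen_Ioo.exists_is_const_of_deriv_eq_zero isPreconnected_Ioo
    (fun x hx => (hderiv x hx).2.2.differentiableAt.differentiableWithinAt)
    (fun x hx => (hderiv x hx).2.2.deriv)
  have hmid : (p + q) / 2 ∈ Ioo p q := ⟨by linarith, by linarith⟩
  refine ⟨s, hs _ hmid ▸ (hderiv _ hmid).1, fun x hx y hy hxy => ?_⟩
  suffices F y - F x = s * (y - x) from ⟨this.ge, this.le⟩
  rcases hxy.eq_or_lt with rfl | hxy
  · simp
  obtain ⟨z, hz, hslope⟩ := exists_hasDerivAt_eq_slope F (deriv F) hxy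
    (hF.mono (Icc_subset_Icc hx.1 hy.2))
    fun z hz => (hderiv z ⟨hx.1.trans_lt hz.1, hz.2.trans_le hy.2⟩).2.1
  rw [hs z ⟨hx.1.trans_lt hz.1, hz.2.trans_le hy.2⟩, eq_div_iff (sub_pos.2 hxy).ne'] at hslope
  linarith

theorem exists_slopeBoundedOn_of_locallyAffine_off_finset (E : Finset ℝ) (hpq : p < q)
    (hF : ContinuousOn F (Icc p q))
    (hloc : ∀ x ∈ Ioo p q, x ∉ E → ∃ s > 0, ∀ᶠ y in 𝓝 x, F y = F x + s * (y - x)) :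
    ∃ c > 0, ∃ C, SlopeBoundedOn c C F (Icc p q) := by
  induction E using Finset.strongInduction generalizing p q with
  | H E ih =>
    by_cases hE : ∃ e ∈ E, e ∈ Ioo p q
    · obtain ⟨e, heE, hpe, heq⟩ := hE
      have hloc' : ∀ x ∈ Ioo p q, x ≠ e → x ∉ E.erase e →
          ∃ s > 0, ∀ᶠ y in 𝓝 x, F y = F x + s * (y - x) := fun x hx hxe hxE =>
        hloc x hx fun hx' => hxE (Finset.mem_erase.2 ⟨hxe, hx'⟩)
      obtain ⟨c₁, hc₁, C₁, h₁⟩ := ih _ (Finset.erase_ssubset heE) hpe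
        (hF.mono (Icc_subset_Icc_right heq.le))
        fun x hx => hloc' x ⟨hx.1, hx.2.trans heq⟩ hx.2.ne
      obtain ⟨c₂, hc₂, C₂, h₂⟩ := ih _ (Finset.erase_ssubset heE) heq
        (hF.mono (Icc_subset_Icc_left hpe.le))
        fun x hx => hloc' x ⟨hpe.trans hx.1, hx.2⟩ hx.1.ne'
      exact ⟨min c₁ c₂, lt_min hc₁ hc₂, max C₁ C₂,
        (h₁.mono_const (min_le_left _ _) (le_max_left _ _)).Icc_union
          (h₂.mono_const (min_le_right _ _) (le_max_right _ _))⟩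
    · push Not at hE
      obtain ⟨s, hs, h⟩ := exists_slopeBoundedOn_of_locallyAffine hpq hF
        fun x hx => hloc x hx fun hxE => hE x hxE hx
      exact ⟨s, hs, s, h⟩

theorem SlopeBoundedOn.Icc_add_one (hper : ∀ x (k : ℤ), F (x + k) = F x + k)
    (h : SlopeBoundedOn c C F (Icc 0 1)) (x : ℝ) : SlopeBoundedOn c C F (Icc x (x + 1)) := by
  have hsub (y z : ℝ) (k : ℤ) : F z - F y = F (z - k) - F (y - k) := by
    have hz := hper (z - k) k
    have hy := hper (y - k) k
    rw [sub_add_cancel] at hz hy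
    linarith
  have h₂ : SlopeBoundedOn c C F (Icc 1 2) := by
    intro y hy z hz hyz
    have := h (y - 1) ⟨by linarith [hy.1], by linarith [hy.2]⟩ (z - 1)
      ⟨by linarith [hz.1], by linarith [hz.2]⟩ (by linarith)
    simpa [hsub y z 1] using this
  intro y hy z hz hyz
  have := h.Icc_union h₂ (y - ⌊x⌋) ⟨by linarith [hy.1, Int.floor_le x], by
    linarith [hy.2, Int.lt_floor_add_one x]⟩ (z - ⌊x⌋) ⟨by linarith [hz.1, hy.1, Int.floor_le x],
    by linarith [hz.2, Int.lt_floor_add_one x]⟩ (by linarith)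
  simpa [hsub y z ⌊x⌋] using this

theorem OrderIso.slopeBoundedOn_symm {e : ℝ ≃o ℝ} (hc : 0 < c)
    (hper : ∀ x, e (x + 1) = e x + 1) (h : ∀ x, SlopeBoundedOn c C e (Icc x (x + 1))) (y : ℝ) :
    SlopeBoundedOn 0 c⁻¹ e.symm (Icc y (y + 1)) := by
  intro u hu v hv huv
  have hle : e.symm u ≤ e.symm v := e.symm.monotone huv
  have hle' : e.symm v ≤ e.symm u + 1 := by
    rw [e.symm_apply_le, hper, e.apply_symm_apply]
    exact hv.2.trans (by linarith [hu.1])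
  have := (h (e.symm u) (e.symm u) ⟨le_rfl, by linarith⟩ (e.symm v) ⟨hle, hle'⟩ hle).1
  simp only [e.apply_symm_apply] at this
  exact ⟨by linarith, by rwa [le_inv_mul_iff₀ hc]⟩

end Slopes

section Circle

theorem UnitCircle.coe_sub_intCast (x : ℝ) (n : ℤ) : ((x - n : ℝ) : UnitCircle) = x := by
  simp

theorem UnitCircle.dist_coe_le (x y : ℝ) : dist (x : UnitCircle) (y : UnitCircle) ≤ dist x y := by
  rw [dist_eq_norm, ← AddCircle.coe_sub]
  exact QuotientAddGroup.norm_mk_le_norm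

theorem UnitCircle.lipschitzWith_of_lift {f : UnitCircle → UnitCircle} {F : ℝ → ℝ} {K : ℝ≥0}
    (hF : ∀ x : ℝ, f x = F x) (hK : ∀ x, LipschitzOnWith K F (Icc x (x + 1))) :
    LipschitzWith K f := by
  refine LipschitzWith.of_dist_le_mul fun ξ η => ?_
  obtain ⟨x, rfl⟩ := QuotientAddGroup.mk_surjective ξ
  obtain ⟨y, rfl⟩ := QuotientAddGroup.mk_surjective η
  -- replace `y` by the lift of its class closest to `x`
  set y' := y + round (x - y)
  have hy' : ((y' : ℝ) : UnitCircle) = y := by simp [y']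
  have hdist : dist (x : UnitCircle) (y : UnitCircle) = |x - y'| := by
    rw [dist_eq_norm, ← AddCircle.coe_sub, UnitAddCircle.norm_eq, sub_sub]
  have hhalf : |x - y'| ≤ 1 / 2 := by
    rw [← hdist, dist_eq_norm]
    simpa using AddCircle.norm_le_half_period 1 (x := (x : UnitCircle) - (y : UnitCircle))
      one_ne_zero
  have hmem (z : ℝ) (hz : z = x ∨ z = y') : z ∈ Icc (min x y') (min x y' + 1) := by
    rcases abs_le.1 hhalf with ⟨h₁, h₂⟩
    rcases le_total x y' with h | h
    · rw [min_eq_left h]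
      rcases hz with rfl | rfl <;> constructor <;> linarith
    · rw [min_eq_right h]
      rcases hz with rfl | rfl <;> constructor <;> linarith
  calc dist (f x) (f y) = dist (f x) (f y') := by rw [hy']
    _ = dist ((F x : ℝ) : UnitCircle) (F y' : ℝ) := by rw [hF, hF]
    _ ≤ dist (F x) (F y') := UnitCircle.dist_coe_le _ _
    _ ≤ K * dist x y' := (hK _).dist_le_mul x (hmem x (.inl rfl)) y' (hmem y' (.inr rfl))
    _ = K * dist (x : UnitCircle) (y : UnitCircle) := by rw [hdist, Real.dist_eq]


/-- Real intervals stand for arcs of the circle: `g` maps the arc `I` into the arc `J` and is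
given on it by a `K`-Lipschitz lift. -/
def HasLipschitzLiftOn (K : ℝ≥0) (g : Equiv.Perm UnitCircle) (I J : Set ℝ) : Prop :=
  ∃ φ : ℝ → ℝ, MapsTo φ I J ∧ LipschitzOnWith K φ I ∧ ∀ x ∈ I, g x = φ x

theorem HasLipschitzLiftOn.mul {K₁ K₂ : ℝ≥0} {g h : Equiv.Perm UnitCircle} {I J J' L : Set ℝ}
    (hg : HasLipschitzLiftOn K₁ g J' L) (hh : HasLipschitzLiftOn K₂ h I J) {k : ℤ}
    (hk : ∀ y ∈ J, y + k ∈ J') : HasLipschitzLiftOn (K₁ * K₂) (g * h) I L := by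
  obtain ⟨ψ, hψ, hψL, hgψ⟩ := hg
  obtain ⟨φ, hφ, hφL, hhφ⟩ := hh
  refine ⟨fun x => ψ (φ x + k), fun x hx => hψ (hk _ (hφ hx)), ?_, fun x hx => ?_⟩
  · refine LipschitzOnWith.of_dist_le_mul fun x hx y hy => ?_
    calc dist (ψ (φ x + k)) (ψ (φ y + k)) ≤ K₁ * dist (φ x + k) (φ y + k) :=
          hψL.dist_le_mul _ (hk _ (hφ hx)) _ (hk _ (hφ hy))
      _ ≤ K₁ * (K₂ * dist x y) := by
          rw [dist_add_right]
          gcongr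
          exact hφL.dist_le_mul x hx y hy
      _ = ↑(K₁ * K₂) * dist x y := by push_cast; ring
  · rw [Equiv.Perm.mul_apply, hhφ x hx, ← hgψ _ (hk _ (hφ hx))]
    simp

end Circle

section ThompsonLipschitz

variable {F : ℝ → ℝ}

theorem IsThompsonLift.map_add_int (hF : IsThompsonLift F) (x : ℝ) (k : ℤ) :
    F (x + k) = F x + k :=
  CircleDeg1Lift.map_add_int ⟨⟨F, hF.1.monotone⟩, hF.2.1⟩ x k

theorem IsThompsonLift.exists_slopeBoundedOn (hF : IsThompsonLift F) (hcont : Continuous F) :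
    ∃ c > 0, ∃ C, ∀ x, SlopeBoundedOn c C F (Icc x (x + 1)) := by
  obtain ⟨B, -, -, hloc⟩ := hF.2.2
  obtain ⟨c, hc, C, h⟩ := exists_slopeBoundedOn_of_locallyAffine_off_finset B zero_lt_one
    hcont.continuousOn fun x hx hxB => by
      obtain ⟨m, ε, hε, h⟩ := hloc x (Ioo_subset_Ico_self hx) hxB
      exact ⟨2 ^ m, zpow_pos two_pos m, Metric.eventually_nhds_iff.2 ⟨ε, hε, fun y hy => h y hy⟩⟩
  exact ⟨c, hc, C, h.Icc_add_one hF.map_add_int⟩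

theorem IsThompsonElt.mem_biLipschitzPerms {f : Equiv.Perm UnitCircle} (hf : IsThompsonElt f) :
    f ∈ biLipschitzPerms UnitCircle := by
  obtain ⟨F, hF, hfF⟩ := hf
  have hsurj : Function.Surjective F := by
    intro y
    obtain ⟨ξ, hξ⟩ := f.surjective y
    obtain ⟨x, rfl⟩ := QuotientAddGroup.mk_surjective ξ
    rw [hfF, QuotientAddGroup.eq, AddSubgroup.mem_zmultiples_iff] at hξ
    obtain ⟨k, hk⟩ := hξ
    rw [zsmul_one] at hk
    exact ⟨x + k, by rw [hF.map_add_int]; linarith⟩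
  obtain ⟨c, hc, C, hslope⟩ :=
    hF.exists_slopeBoundedOn (hF.1.monotone.continuous_of_surjective hsurj)
  set e := StrictMono.orderIsoOfSurjective F hF.1 hsurj
  have hfe : ∀ y : ℝ, f⁻¹ y = (e.symm y : ℝ) := by
    intro y
    rw [Equiv.Perm.inv_eq_iff_eq, hfF]
    exact congrArg _ (e.apply_symm_apply y).symm
  exact ⟨⟨_, UnitCircle.lipschitzWith_of_lift hfF fun x => (hslope x).lipschitzOnWith hc.le⟩,
    _, UnitCircle.lipschitzWith_of_lift hfe fun y =>
      (e.slopeBoundedOn_symm hc hF.2.1 hslope y).lipschitzOnWith le_rfl⟩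

theorem ThompsonT_le_biLipschitzPerms : ThompsonT ≤ biLipschitzPerms UnitCircle :=
  (Subgroup.closure_le _).2 fun _ hf => IsThompsonElt.mem_biLipschitzPerms hf

end ThompsonLipschitz

section Generators

theorem IsThompsonLift.of_affine_pieces {F : ℝ → ℝ} (hmono : StrictMono F)
    (hper : ∀ x, F (x + 1) = F x + 1) (B : Finset ℝ) (hB : ↑B ⊆ Ico (0 : ℝ) 1)
    (hdyadic : ∀ x ∈ B, IsDyadic x ∧ IsDyadic (F x))
    (hpieces : ∀ x ∈ Ico (0 : ℝ) 1, x ∉ B → ∃ p q, x ∈ Ioo p q ∧ ∃ (m : ℤ) (c : ℝ),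
      ∀ y ∈ Ioo p q, F y = 2 ^ m * y + c) :
    IsThompsonLift F := by
  refine ⟨hmono, hper, B, hB, hdyadic, fun x hx hxB => ?_⟩
  obtain ⟨p, q, hxpq, m, c, hF⟩ := hpieces x hx hxB
  obtain ⟨ε, hε, hball⟩ := Metric.eventually_nhds_iff.1 (Ioo_mem_nhds hxpq.1 hxpq.2)
  exact ⟨m, ε, hε, fun y hy => by rw [hF y (hball hy), hF x hxpq]; ring⟩

theorem IsRotHalf.isThompsonElt {a : Equiv.Perm UnitCircle} (ha : IsRotHalf a) :
    IsThompsonElt a := by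
  refine ⟨(· + 1 / 2), .of_affine_pieces (strictMono_id.add_const _) (fun x => by ring) ∅
    (by simp) (by simp) fun x _ _ => ⟨x - 1, x + 1, ⟨by linarith, by linarith⟩, 0, 1 / 2,
      fun y _ => by simp⟩, ha⟩

def bLiftCore (t : ℝ) : ℝ :=
  if t ≤ 1 / 2 then t / 2 + 3 / 4 else if t ≤ 3 / 4 then 2 * t else t + 3 / 4

def bLift (x : ℝ) : ℝ := ⌊x⌋ + bLiftCore (Int.fract x)

theorem bLift_of_mem_Ico {x : ℝ} (hx : x ∈ Ico (0 : ℝ) 1) : bLift x = bLiftCore x := by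
  rw [bLift, Int.floor_eq_zero_iff.2 hx, Int.fract_eq_self.2 hx, Int.cast_zero, zero_add]

theorem bLift_add_one (x : ℝ) : bLift (x + 1) = bLift x + 1 := by
  rw [bLift, bLift, Int.floor_add_one, Int.fract_add_one]
  push_cast
  ring

theorem bLift_strictMono : StrictMono bLift := by
  have hcore : ∀ t ∈ Ico (0 : ℝ) 1, 3 / 4 ≤ bLiftCore t ∧ bLiftCore t < 7 / 4 := by
    intro t ht
    rw [bLiftCore]
    split_ifs <;> constructor <;> linarith [ht.1, ht.2]
  intro x y hxy
  rcases (Int.floor_mono hxy.le).eq_or_lt with heq | hlt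
  · have hfract : Int.fract x < Int.fract y := by
      rw [Int.fract, Int.fract, heq]
      linarith
    have := Int.fract_nonneg x
    rw [bLift, bLift, heq, add_lt_add_iff_left, bLiftCore, bLiftCore]
    split_ifs <;> linarith
  · have hx := hcore _ ⟨Int.fract_nonneg x, Int.fract_lt_one x⟩
    have hy := hcore _ ⟨Int.fract_nonneg y, Int.fract_lt_one y⟩
    have : (⌊x⌋ : ℝ) + 1 ≤ ⌊y⌋ := by exact_mod_cast hlt
    rw [bLift, bLift]
    linarith [hx.2, hy.1]

theorem IsBElt.apply_coe {b : Equiv.Perm UnitCircle} (hb : IsBElt b) (x : ℝ) :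
    b x = (bLift x : ℝ) := by
  have ht : Int.fract x ∈ Icc (0 : ℝ) 1 := ⟨Int.fract_nonneg x, (Int.fract_lt_one x).le⟩
  have hx : ((x : ℝ) : UnitCircle) = (Int.fract x : ℝ) := by
    rw [← Int.fract_add_floor x]
    simp
  obtain ⟨k, hk⟩ : ∃ k : ℤ, bLift x = bMap (Int.fract x) + k := by
    rw [bLift, bMap, bLiftCore]
    split_ifs
    · exact ⟨⌊x⌋, by ring⟩
    · exact ⟨⌊x⌋ + 1, by push_cast; ring⟩
    · exact ⟨⌊x⌋ + 1, by push_cast; ring⟩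
  rw [hx, hb _ ht, hk]
  simp

theorem IsBElt.isThompsonElt {b : Equiv.Perm UnitCircle} (hb : IsBElt b) : IsThompsonElt b := by
  refine ⟨bLift, .of_affine_pieces bLift_strictMono bLift_add_one {0, 1 / 2, 3 / 4} ?_ ?_ ?_,
    hb.apply_coe⟩
  · intro x hx
    simp only [Finset.coe_insert, Finset.coe_singleton, mem_insert_iff, mem_singleton_iff] at hx
    rcases hx with rfl | rfl | rfl <;> norm_num
  · simp only [Finset.mem_insert, Finset.mem_singleton, forall_eq_or_imp, forall_eq]
    refine ⟨⟨⟨0, 0, by norm_num⟩, 3, 2, ?_⟩, ⟨⟨1, 1, by norm_num⟩, 1, 0, ?_⟩, ⟨3, 2, by norm_num⟩,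
      3, 1, ?_⟩ <;> rw [bLift_of_mem_Ico (by norm_num)] <;> norm_num [bLiftCore]
  · intro x hx hxB
    simp only [Finset.mem_insert, Finset.mem_singleton, not_or] at hxB
    have hcore {p q : ℝ} (hp : 0 ≤ p) (hq : q ≤ 1) {m : ℤ} {c : ℝ}
        (h : ∀ y ∈ Ioo p q, bLiftCore y = 2 ^ m * y + c) :
        ∀ y ∈ Ioo p q, bLift y = 2 ^ m * y + c := fun y hy => by
      rw [bLift_of_mem_Ico ⟨hp.trans hy.1.le, hy.2.trans_le hq⟩, h y hy]
    rcases lt_or_gt_of_ne hxB.2.1 with h₁ | h₁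
    · refine ⟨0, 1 / 2, ⟨hx.1.lt_of_ne' hxB.1, h₁⟩, -1, 3 / 4, hcore le_rfl (by norm_num) ?_⟩
      intro y hy
      rw [bLiftCore, if_pos hy.2.le, zpow_neg_one]
      ring
    rcases lt_or_gt_of_ne hxB.2.2 with h₂ | h₂
    · refine ⟨1 / 2, 3 / 4, ⟨h₁, h₂⟩, 1, 0, hcore (by norm_num) (by norm_num) ?_⟩
      intro y hy
      rw [bLiftCore, if_neg (not_le.2 hy.1), if_pos hy.2.le, zpow_one, add_zero]
    · refine ⟨3 / 4, 1, ⟨h₂, hx.2⟩, 0, 3 / 4, hcore (by norm_num) le_rfl ?_⟩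
      intro y hy
      rw [bLiftCore, if_neg (by linarith [hy.1]), if_neg (not_le.2 hy.1), zpow_zero, one_mul]


theorem IsRotHalf.inv_apply_coe {a : Equiv.Perm UnitCircle} (ha : IsRotHalf a) (x : ℝ) :
    a⁻¹ x = (x - 1 / 2 : ℝ) := by
  rw [Equiv.Perm.inv_eq_iff_eq, ha, sub_add_cancel]

section BranchesOfB

variable {b : Equiv.Perm UnitCircle} (hb : IsBElt b) {x : ℝ}
include hb


theorem IsBElt.apply_coe_sub_int (n : ℤ) (hx : x - n ∈ Icc (0 : ℝ) 1) :
    b x = (bMap (x - n) : ℝ) := by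
  rw [← hb _ hx, UnitCircle.coe_sub_intCast]

theorem IsBElt.apply_coe_of_le_half (n : ℤ) (h₀ : n ≤ x) (h₁ : x ≤ n + 1 / 2) :
    b x = ((x - n) / 2 + 3 / 4 : ℝ) := by
  rw [hb.apply_coe_sub_int n ⟨by linarith, by linarith⟩, bMap, if_pos (by linarith)]

theorem IsBElt.apply_coe_of_three_quarters_lt (n : ℤ) (h₀ : n + 3 / 4 < x) (h₁ : x ≤ n + 1) :
    b x = (x - n - 1 / 4 : ℝ) := by
  rw [hb.apply_coe_sub_int n ⟨by linarith, by linarith⟩, bMap, if_neg (by linarith),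
    if_neg (by linarith)]

theorem IsBElt.inv_apply_coe_of_le_half (n : ℤ) (h₀ : n < x) (h₁ : x ≤ n + 1 / 2) :
    b⁻¹ x = ((x - n + 1) / 2 : ℝ) := by
  rw [Equiv.Perm.inv_eq_iff_eq, hb.apply_coe_sub_int 0 (by constructor <;> push_cast <;> linarith),
    bMap, if_neg (by push_cast; linarith), if_pos (by push_cast; linarith), Int.cast_zero,
    sub_zero, show 2 * ((x - n + 1) / 2) - 1 = x - n by ring, UnitCircle.coe_sub_intCast]

theorem IsBElt.inv_apply_coe_of_half_lt (h₀ : 1 / 2 < x) (h₁ : x ≤ 3 / 4) :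
    b⁻¹ x = (x + 1 / 4 : ℝ) := by
  rw [Equiv.Perm.inv_eq_iff_eq, hb.apply_coe_of_three_quarters_lt 0 (by push_cast; linarith)
    (by push_cast; linarith)]
  simp

end BranchesOfB

end Generators

section PingPong

variable {a b : Equiv.Perm UnitCircle}

def freeGen (a b : Equiv.Perm UnitCircle) (x : Bool) : Equiv.Perm UnitCircle :=
  if x then a * b * a * b else a * b⁻¹ * a * b⁻¹

/-- The image of the letter `l` of `FreeGroup.toWord`, as in `FreeGroup.lift_mk`. -/
def freeLetter (a b : Equiv.Perm UnitCircle) (l : Bool × Bool) : Equiv.Perm UnitCircle :=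
  bif l.2 then freeGen a b l.1 else (freeGen a b l.1)⁻¹

theorem range_freeGen (a b : Equiv.Perm UnitCircle) :
    range (freeGen a b) = {a * b * a * b, a * b⁻¹ * a * b⁻¹} := by
  ext g
  simp [freeGen, or_comm]

theorem freeGen_mem_thompsonT (ha : IsRotHalf a) (hb : IsBElt b) (x : Bool) :
    freeGen a b x ∈ ThompsonT := by
  have haT : a ∈ ThompsonT := Subgroup.subset_closure ha.isThompsonElt
  have hbT : b ∈ ThompsonT := Subgroup.subset_closure hb.isThompsonElt
  cases x
  · exact mul_mem (mul_mem (mul_mem haT (inv_mem hbT)) haT) (inv_mem hbT)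
  · exact mul_mem (mul_mem (mul_mem haT hbT) haT) hbT

theorem abab_apply_coe (ha : IsRotHalf a) (hb : IsBElt b) {x : ℝ} (h₀ : 3 / 4 < x)
    (h₁ : x < 3 / 2) : (a * b * a * b) x = (min (x / 2 + 7 / 8) (x / 4 + 9 / 8) : ℝ) := by
  change a (b (a (b x))) = _
  rcases le_or_gt x 1 with h | h
  · rw [hb.apply_coe_of_three_quarters_lt 0 (by push_cast; linarith) (by push_cast; linarith),
      ha, hb.apply_coe_of_le_half 1 (by push_cast; linarith) (by push_cast; linarith), ha,
      min_eq_left (by linarith)]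
    congr 1; push_cast; ring
  · rw [hb.apply_coe_of_le_half 1 (by push_cast; linarith) (by push_cast; linarith), ha,
      hb.apply_coe_of_le_half 1 (by push_cast; linarith) (by push_cast; linarith), ha,
      min_eq_right (by linarith)]
    congr 1; push_cast; ring

theorem abab_inv_apply_coe (ha : IsRotHalf a) (hb : IsBElt b) {x : ℝ} (h₀ : 1 / 2 < x)
    (h₁ : x < 5 / 4) : (a * b * a * b)⁻¹ x = (max (x / 2 + 1 / 8) (x / 4 + 3 / 8) : ℝ) := by
  change b⁻¹ (a⁻¹ (b⁻¹ (a⁻¹ x))) = _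
  rcases le_or_gt x 1 with h | h
  · rw [ha.inv_apply_coe, hb.inv_apply_coe_of_le_half 0 (by push_cast; linarith)
      (by push_cast; linarith), ha.inv_apply_coe, hb.inv_apply_coe_of_le_half 0
      (by push_cast; linarith) (by push_cast; linarith), max_eq_right (by linarith)]
    congr 1; push_cast; ring
  · rw [ha.inv_apply_coe, hb.inv_apply_coe_of_half_lt (by linarith) (by linarith),
      ha.inv_apply_coe, hb.inv_apply_coe_of_le_half 0 (by push_cast; linarith)
      (by push_cast; linarith), max_eq_left (by linarith)]
    congr 1; push_cast; ring

theorem abInvAbInv_apply_coe (ha : IsRotHalf a) (hb : IsBElt b) {x : ℝ} (h₀ : 0 < x)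
    (h₁ : x < 3 / 4) : (a * b⁻¹ * a * b⁻¹) x = (max (x / 2 + 7 / 8) (x / 4 + 1) : ℝ) := by
  change a (b⁻¹ (a (b⁻¹ x))) = _
  rcases le_or_gt x (1 / 2) with h | h
  · rw [hb.inv_apply_coe_of_le_half 0 (by push_cast; linarith) (by push_cast; linarith), ha,
      hb.inv_apply_coe_of_le_half 1 (by push_cast; linarith) (by push_cast; linarith), ha,
      max_eq_right (by linarith)]
    congr 1; push_cast; ring
  · rw [hb.inv_apply_coe_of_half_lt h h₁.le, ha,
      hb.inv_apply_coe_of_le_half 1 (by push_cast; linarith) (by push_cast; linarith), ha,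
      max_eq_left (by linarith)]
    congr 1; push_cast; ring

theorem abInvAbInv_inv_apply_coe (ha : IsRotHalf a) (hb : IsBElt b) {x : ℝ} (h₀ : 1 / 4 < x)
    (h₁ : x < 1) : (a * b⁻¹ * a * b⁻¹)⁻¹ x = (min (x / 2 + 5 / 8) (x / 4 + 3 / 4) : ℝ) := by
  change b (a⁻¹ (b (a⁻¹ x))) = _
  rcases le_or_gt x (1 / 2) with h | h
  · rw [ha.inv_apply_coe, hb.apply_coe_of_three_quarters_lt (-1) (by push_cast; linarith)
      (by push_cast; linarith), ha.inv_apply_coe, hb.apply_coe_of_le_half 0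
      (by push_cast; linarith) (by push_cast; linarith), min_eq_left (by linarith)]
    congr 1; push_cast; ring
  · rw [ha.inv_apply_coe, hb.apply_coe_of_le_half 0 (by push_cast; linarith)
      (by push_cast; linarith), ha.inv_apply_coe, hb.apply_coe_of_le_half 0
      (by push_cast; linarith) (by push_cast; linarith), min_eq_right (by linarith)]
    congr 1; push_cast; ring

/- The ping-pong table: the letter `l` maps the arc `letterDomain l` into the arc
`letterRange l` through the lift `letterLift l`, which has slopes `1/2` and `1/4`. -/

def letterDomain : Bool × Bool → Set ℝ
  | (true, true) => Ioo (3 / 4) (3 / 2)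
  | (true, false) => Ioo (1 / 2) (5 / 4)
  | (false, true) => Ioo 0 (3 / 4)
  | (false, false) => Ioo (1 / 4) 1

def letterRange : Bool × Bool → Set ℝ
  | (true, true) => Ioo (5 / 4) (3 / 2)
  | (true, false) => Ioo (1 / 2) (3 / 4)
  | (false, true) => Ioo 1 (5 / 4)
  | (false, false) => Ioo (3 / 4) 1

def letterLift : Bool × Bool → ℝ → ℝ
  | (true, true), x => min (x / 2 + 7 / 8) (x / 4 + 9 / 8)
  | (true, false), x => max (x / 2 + 1 / 8) (x / 4 + 3 / 8)
  | (false, true), x => max (x / 2 + 7 / 8) (x / 4 + 1)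
  | (false, false), x => min (x / 2 + 5 / 8) (x / 4 + 3 / 4)

theorem lipschitzWith_div_add {n : ℝ} (hn : 2 ≤ n) (c : ℝ) :
    LipschitzWith (1 / 2) fun x : ℝ => x / n + c := by
  refine LipschitzWith.of_dist_le_mul fun x y => ?_
  rw [Real.dist_eq, Real.dist_eq, show x / n + c - (y / n + c) = (x - y) / n by ring, abs_div,
    abs_of_pos (by linarith : (0 : ℝ) < n)]
  push_cast
  rw [one_div_mul_eq_div]
  exact div_le_div_of_nonneg_left (abs_nonneg _) two_pos hn

theorem letterLift_lipschitzWith (l : Bool × Bool) : LipschitzWith (1 / 2) (letterLift l) := by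
  have h₂ := lipschitzWith_div_add (le_refl (2 : ℝ))
  have h₄ := lipschitzWith_div_add (by norm_num : (2 : ℝ) ≤ 4)
  rw [← max_self (1 / 2)]
  rcases l with ⟨_ | _, _ | _⟩
  · exact (h₂ _).min (h₄ _)
  · exact (h₂ _).max (h₄ _)
  · exact (h₂ _).max (h₄ _)
  · exact (h₂ _).min (h₄ _)

theorem letterLift_mapsTo (l : Bool × Bool) :
    MapsTo (letterLift l) (letterDomain l) (letterRange l) := by
  intro x hx
  rcases l with ⟨_ | _, _ | _⟩ <;> obtain ⟨h₀, h₁⟩ := hx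
  · exact ⟨lt_min (by linarith) (by linarith), min_lt_of_right_lt (by linarith)⟩
  · exact ⟨lt_max_of_lt_right (by linarith), max_lt (by linarith) (by linarith)⟩
  · exact ⟨lt_max_of_lt_right (by linarith), max_lt (by linarith) (by linarith)⟩
  · exact ⟨lt_min (by linarith) (by linarith), min_lt_of_right_lt (by linarith)⟩

theorem freeLetter_apply_coe (ha : IsRotHalf a) (hb : IsBElt b) (l : Bool × Bool) {x : ℝ}
    (hx : x ∈ letterDomain l) : freeLetter a b l x = (letterLift l x : ℝ) := by
  rcases l with ⟨_ | _, _ | _⟩ <;> obtain ⟨h₀, h₁⟩ := hx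
  · exact abInvAbInv_inv_apply_coe ha hb h₀ h₁
  · exact abInvAbInv_apply_coe ha hb h₀ h₁
  · exact abab_inv_apply_coe ha hb h₀ h₁
  · exact abab_apply_coe ha hb h₀ h₁

theorem hasLipschitzLiftOn_freeLetter (ha : IsRotHalf a) (hb : IsBElt b) (l : Bool × Bool) :
    HasLipschitzLiftOn (1 / 2) (freeLetter a b l) (letterDomain l) (letterRange l) :=
  ⟨letterLift l, letterLift_mapsTo l, (letterLift_lipschitzWith l).lipschitzOnWith,
    fun _ hx => freeLetter_apply_coe ha hb l hx⟩

theorem exists_add_int_mem_letterDomain {l l' : Bool × Bool} (h : l.1 = l'.1 → l.2 = l'.2) :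
    ∃ k : ℤ, ∀ y ∈ letterRange l', y + k ∈ letterDomain l := by
  rcases l with ⟨_ | _, _ | _⟩ <;> rcases l' with ⟨_ | _, _ | _⟩ <;>
    first
    | exact absurd (h rfl) (by decide)
    | (refine ⟨0, fun y ⟨h₀, h₁⟩ => ⟨?_, ?_⟩⟩ <;> push_cast <;> linarith)
    | (refine ⟨-1, fun y ⟨h₀, h₁⟩ => ⟨?_, ?_⟩⟩ <;> push_cast <;> linarith)

theorem hasLipschitzLiftOn_prod_freeLetter (ha : IsRotHalf a) (hb : IsBElt b) (l : Bool × Bool)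
    (L : List (Bool × Bool)) (hL : FreeGroup.IsReduced (l :: L)) :
    HasLipschitzLiftOn ((1 / 2) ^ (L.length + 1)) ((l :: L).map (freeLetter a b)).prod
      (letterDomain ((l :: L).getLast (List.cons_ne_nil l L))) (letterRange l) := by
  induction L generalizing l with
  | nil => simpa using hasLipschitzLiftOn_freeLetter ha hb l
  | cons l' L ih =>
    rw [FreeGroup.isReduced_cons_cons] at hL
    obtain ⟨k, hk⟩ := exists_add_int_mem_letterDomain hL.1
    rw [List.map_cons, List.prod_cons, List.getLast_cons_cons, List.length_cons, pow_succ']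
    exact (hasLipschitzLiftOn_freeLetter ha hb l).mul (ih l' hL.2) hk

theorem exists_dist_lift_apply_le (ha : IsRotHalf a) (hb : IsBElt b) (w : FreeGroup Bool) :
    ∃ x : ℝ, dist (FreeGroup.lift (freeGen a b) w x)
      (FreeGroup.lift (freeGen a b) w (x + 1 / 4 : ℝ)) ≤ (1 / 2) ^ w.toWord.length / 4 := by
  have hw : FreeGroup.lift (freeGen a b) w = (w.toWord.map (freeLetter a b)).prod := by
    conv_lhs => rw [← FreeGroup.mk_toWord (x := w), FreeGroup.lift_mk]
    rfl
  have hred := FreeGroup.isReduced_toWord (x := w)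
  rw [hw]
  generalize w.toWord = L at hred ⊢
  rcases L with _ | ⟨l, L⟩
  · refine ⟨0, (UnitCircle.dist_coe_le _ _).trans ?_⟩
    norm_num [Real.dist_eq]
  obtain ⟨φ, -, hφL, hφ⟩ := hasLipschitzLiftOn_prod_freeLetter ha hb l L hred
  obtain ⟨x, hx, hx'⟩ : ∃ x, x ∈ letterDomain ((l :: L).getLast (List.cons_ne_nil l L)) ∧
      x + 1 / 4 ∈ letterDomain ((l :: L).getLast (List.cons_ne_nil l L)) := by
    rcases (l :: L).getLast _ with ⟨_ | _, _ | _⟩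
    · exact ⟨1 / 2, by norm_num [letterDomain]⟩
    · exact ⟨1 / 4, by norm_num [letterDomain]⟩
    · exact ⟨3 / 4, by norm_num [letterDomain]⟩
    · exact ⟨1, by norm_num [letterDomain]⟩
  refine ⟨x, ?_⟩
  rw [hφ x hx, hφ _ hx']
  calc dist ((φ x : ℝ) : UnitCircle) (φ (x + 1 / 4) : ℝ) ≤ dist (φ x) (φ (x + 1 / 4)) :=
        UnitCircle.dist_coe_le _ _
    _ ≤ ((1 / 2) ^ (L.length + 1) : ℝ≥0) * dist x (x + 1 / 4) := hφL.dist_le_mul _ hx _ hx'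
    _ = (1 / 2) ^ (l :: L).length / 4 := by
        rw [Real.dist_eq, show x - (x + 1 / 4) = -(1 / 4) by ring, abs_neg,
          abs_of_pos (by norm_num : (0 : ℝ) < 1 / 4), List.length_cons]
        push_cast
        ring

theorem two_pow_length_le_of_lipschitzWith_inv (ha : IsRotHalf a) (hb : IsBElt b)
    (w : FreeGroup Bool) {K : ℝ≥0} (hK : LipschitzWith K ⇑(FreeGroup.lift (freeGen a b) w)⁻¹) :
    2 ^ w.toWord.length ≤ K := by
  set g := FreeGroup.lift (freeGen a b) w
  set n := w.toWord.length
  obtain ⟨x, hx⟩ := exists_dist_lift_apply_le ha hb w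
  have hquarter : dist (g⁻¹ (g x)) (g⁻¹ (g (x + 1 / 4 : ℝ))) = 1 / 4 := by
    rw [Equiv.Perm.coe_inv, Equiv.symm_apply_apply, Equiv.symm_apply_apply, dist_eq_norm,
      ← AddCircle.coe_sub, show x - (x + 1 / 4) = -(1 / 4) by ring,
      (AddCircle.norm_coe_eq_abs_iff _ one_ne_zero).2 (by norm_num [abs_of_pos])]
    norm_num
  have hle : (1 / 4 : ℝ) ≤ K * ((1 / 2) ^ n / 4) :=
    calc (1 / 4 : ℝ) = dist (g⁻¹ (g x)) (g⁻¹ (g (x + 1 / 4 : ℝ))) := hquarter.symm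
      _ ≤ K * dist (g x) (g (x + 1 / 4 : ℝ)) := hK.dist_le_mul _ _
      _ ≤ K * ((1 / 2) ^ n / 4) := by gcongr
  have h2 : (2 : ℝ) ^ n * (1 / 2) ^ n = 1 := by rw [← mul_pow]; norm_num
  rw [← NNReal.coe_le_coe, NNReal.coe_pow, NNReal.coe_ofNat]
  calc (2 : ℝ) ^ n = 2 ^ n * (4 * (1 / 4)) := by ring
    _ ≤ 2 ^ n * (4 * (K * ((1 / 2) ^ n / 4))) := by gcongr
    _ = K := by linear_combination (K : ℝ) * h2


theorem exists_length_toWord_le_mul_wordLen (ha : IsRotHalf a) (hb : IsBElt b)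
    {Z : Set (Equiv.Perm UnitCircle)} (hZ : Z.Finite)
    (hZT : Subgroup.closure Z = ThompsonT) :
    ∃ j : ℕ, ∀ w : FreeGroup Bool,
      w.toWord.length ≤ j * wordLen Z (FreeGroup.lift (freeGen a b) w) := by
  obtain ⟨K, hK⟩ := exists_lipschitzWith_pow_wordLen hZ fun z hz =>
    ThompsonT_le_biLipschitzPerms (hZT ▸ Subgroup.subset_closure hz)
  obtain ⟨j, hj⟩ := pow_unbounded_of_one_lt K (one_lt_two : (1 : ℝ≥0) < 2)
  have hH : (FreeGroup.lift (freeGen a b)).range ≤ Subgroup.closure Z := by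
    rw [FreeGroup.range_lift_eq_closure, Subgroup.closure_le, hZT]
    exact range_subset_iff.2 (freeGen_mem_thompsonT ha hb)
  refine ⟨j, fun w => (pow_le_pow_iff_right₀ (one_lt_two : (1 : ℝ≥0) < 2)).1 ?_⟩
  have hgZ := hH ⟨w, rfl⟩
  refine two_pow_length_le_of_lipschitzWith_inv ha hb w ((hK _ (inv_mem hgZ)).weaken ?_)
  rw [pow_mul]
  exact (pow_le_pow_left₀ K.2 hj.le _).trans
    (pow_le_pow_right₀ (one_le_pow₀ one_le_two) (wordLen_inv_le hgZ))

end PingPong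

/-- The subgroup `H` of Thompson's group `T` generated by `abab` and `ab⁻¹ab⁻¹` is a
free group of rank 2 (these two elements freely generate it), and `H` is undistorted
in `T`. -/
theorem free_subgroup_undistorted (a b : Equiv.Perm UnitCircle)
    (ha : IsRotHalf a) (hb : IsBElt b) :
    Function.Injective
      (FreeGroup.lift (fun x : Bool =>
        if x then a * b * a * b else a * b⁻¹ * a * b⁻¹) :
        FreeGroup Bool →* Equiv.Perm UnitCircle) ∧
    ∀ Z : Set (Equiv.Perm UnitCircle), Z.Finite → Subgroup.closure Z = ThompsonT →
      ∃ K : ℝ, 0 < K ∧ ∃ L : ℝ,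
        ∀ g ∈ Subgroup.closure ({a * b * a * b, a * b⁻¹ * a * b⁻¹} :
            Set (Equiv.Perm UnitCircle)),
          (wordLen ({a * b * a * b, a * b⁻¹ * a * b⁻¹} : Set (Equiv.Perm UnitCircle)) g : ℝ) ≤
            K * (wordLen Z g : ℝ) + L := by
  refine ⟨(injective_iff_map_eq_one _).2 fun w hw => ?_, fun Z hZ hZT => ?_⟩
  · have h := two_pow_length_le_of_lipschitzWith_inv ha hb w (K := 1) <| by
      rw [show FreeGroup.lift (freeGen a b) w = 1 from hw, inv_one]
      exact LipschitzWith.id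
    exact FreeGroup.toWord_eq_nil_iff.1 <| List.eq_nil_of_length_eq_zero <|
      by_contra fun hn => (one_lt_pow₀ one_lt_two hn).not_ge h
  obtain ⟨j, hj⟩ := exists_length_toWord_le_mul_wordLen ha hb hZ hZT
  refine ⟨j + 1, by positivity, 0, fun g hg => ?_⟩
  rw [← range_freeGen, ← FreeGroup.range_lift_eq_closure] at hg
  obtain ⟨w, rfl⟩ := hg
  have hS := (wordLen_lift_le (fun x => range_freeGen a b ▸ mem_range_self x) w).trans (hj w)
  calc _ ≤ (j : ℝ) * wordLen Z (FreeGroup.lift (freeGen a b) w) := by exact_mod_cast hS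
    _ ≤ _ := by rw [add_zero]; gcongr; linarith

end
end
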